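/- Let F be a 2-CNF with loopless implication digraph D(F), let ρ be an implicant of F, and suppose a fixed assignment to the variables on cycles of D(F) is given. If u is a literal not on any cycle such that all out-neighbors and in-neighbors of u in D(F) are literals on cycles, then the value of u under any prime implicant extending the fixed cycle-variable assignment is uniquely determined: u is 0 if it has an out-neighbor set to 0, u is 1 if it has an in-neighbor set to 1, and u is free otherwise. -/

import Mathlib

variable {V : Type*}

abbrev Lit (V : Type*) := V × Bool

def evalLit (α : V → Bool) (l : Lit V) : Bool := α l.1 == l.2

abbrev Clause2 (V : Type*) := Lit V × Lit V
abbrev CNF2 (V : Type*) := List (Clause2 V)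
abbrev CNF (V : Type*) := List (List (Lit V))

def sat2 (α : V → Bool) (F : CNF2 V) : Prop :=
  ∀ c ∈ F, evalLit α c.1 = true ∨ evalLit α c.2 = true

def satCNF (α : V → Bool) (F : CNF V) : Prop :=
  ∀ C ∈ F, ∃ l ∈ C, evalLit α l = true

def kCNF (k : ℕ) (F : CNF V) : Prop := ∀ C ∈ F, C.length ≤ k

def extendsR (α : V → Bool) (ρ : V → Option Bool) : Prop :=
  ∀ v b, ρ v = some b → α v = b

def unfix [DecidableEq V] (ρ : V → Option Bool) (v : V) : V → Option Bool :=
  Function.update ρ v none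

def implicant2 (ρ : V → Option Bool) (F : CNF2 V) : Prop :=
  ∀ α, extendsR α ρ → sat2 α F

def primeImplicant2 [DecidableEq V] (ρ : V → Option Bool) (F : CNF2 V) : Prop :=
  implicant2 ρ F ∧ ∀ v, ρ v ≠ none → ¬ implicant2 (unfix ρ v) F

def partialPI [DecidableEq V] (ρ : V → Option Bool) (F : CNF2 V) : Prop :=
  primeImplicant2 ρ F ∧ ∃ v, ρ v = none

def implicantC (ρ : V → Option Bool) (F : CNF V) : Prop :=
  ∀ α, extendsR α ρ → satCNF α F

def primeImplicantC [DecidableEq V] (ρ : V → Option Bool) (F : CNF V) : Prop :=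
  implicantC ρ F ∧ ∀ v, ρ v ≠ none → ¬ implicantC (unfix ρ v) F

def implicantF (ρ : V → Option Bool) (f : (V → Bool) → Bool) : Prop :=
  ∀ α, extendsR α ρ → f α = true

def primeImplicantF [DecidableEq V] (ρ : V → Option Bool) (f : (V → Bool) → Bool) : Prop :=
  implicantF ρ f ∧ ∀ v, ρ v ≠ none → ¬ implicantF (unfix ρ v) f

def negLit (l : Lit V) : Lit V := (l.1, !l.2)

def edge (F : CNF2 V) (u v : Lit V) : Prop :=
  ∃ c ∈ F, (u = negLit c.1 ∧ v = c.2) ∨ (u = negLit c.2 ∧ v = c.1)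

def impliesL (F : CNF2 V) : Lit V → Lit V → Prop := Relation.TransGen (edge F)

def onCycle (F : CNF2 V) (u : Lit V) : Prop := impliesL F u u

def acyclicD (F : CNF2 V) : Prop := ∀ u, ¬ onCycle F u

def looplessD (F : CNF2 V) : Prop := ∀ u, ¬ edge F u u

def litVal (ρ : V → Option Bool) (l : Lit V) : Option Bool := (ρ l.1).map (· == l.2)

def Aset (ρ : V → Option Bool) : Set (Lit V) := {l | litVal ρ l = some false}
def Bset (ρ : V → Option Bool) : Set (Lit V) := {l | litVal ρ l = some true}
def Cset (ρ : V → Option Bool) : Set (Lit V) := {l | litVal ρ l = none}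

def Nminus (F : CNF2 V) (S : Set (Lit V)) : Set (Lit V) :=
  {u | u ∉ S ∧ ∃ v ∈ S, impliesL F u v}
def Nplus (F : CNF2 V) (S : Set (Lit V)) : Set (Lit V) :=
  {v | v ∉ S ∧ ∃ u ∈ S, impliesL F u v}

def Tfml (m : ℕ) : CNF2 (Fin m × Fin 3) :=
  (List.finRange m).flatMap (fun i =>
    [(((i, 0), true), ((i, 1), true)),
     (((i, 1), true), ((i, 2), true)),
     (((i, 0), true), ((i, 2), true))])

def adjVar (F : CNF2 V) (x y : V) : Prop :=
  x ≠ y ∧ ∃ u v : Lit V, u.1 = x ∧ v.1 = y ∧ (impliesL F u v ∨ impliesL F v u)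

/-!
Edges of `D(F)` propagate truth forward and falsity backward through every implicant, which gives
the first two claims. Through a loopless digraph an unassigned literal forces each out-neighbour
to be true, so a literal on a cycle, which reaches itself, cannot be unassigned. Hence, in the
remaining case, every out-neighbour of `u` is true and every in-neighbour false, all on variables
other than that of `u`; these literals alone satisfy every clause containing `u` or `negLit u`, so
`ρ` with the variable of `u` unassigned is still an implicant, and primality forbids `ρ` to assign it.
-/

section ImplicationDigraph

variable {F : CNF2 V} {l l' u w : Lit V}

@[simp] lemma negLit_negLit (l : Lit V) : negLit (negLit l) = l := by
  simp [negLit]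

@[simp] lemma evalLit_negLit (α : V → Bool) (l : Lit V) :
    evalLit α (negLit l) = !evalLit α l := by
  unfold evalLit negLit
  cases α l.1 <;> cases l.2 <;> rfl

lemma litVal_negLit (ρ : V → Option Bool) (l : Lit V) :
    litVal ρ (negLit l) = (litVal ρ l).map (!·) := by
  unfold litVal negLit
  cases ρ l.1 with
  | none => rfl
  | some b => cases b <;> cases l.2 <;> rfl

lemma litVal_eq_none_iff (ρ : V → Option Bool) (l : Lit V) :
    litVal ρ l = none ↔ ρ l.1 = none := by
  simp [litVal]

lemma eq_or_eq_negLit_of_fst_eq (h : l.1 = u.1) : l = u ∨ l = negLit u := by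
  obtain ⟨x, b⟩ := l
  obtain ⟨y, c⟩ := u
  obtain rfl : x = y := h
  cases b <;> cases c <;> simp [negLit]

lemma edge_negLit (h : edge F l l') : edge F (negLit l') (negLit l) := by
  obtain ⟨c, hc, ⟨rfl, rfl⟩ | ⟨rfl, rfl⟩⟩ := h
  · exact ⟨c, hc, Or.inr ⟨rfl, by simp⟩⟩
  · exact ⟨c, hc, Or.inl ⟨rfl, by simp⟩⟩

lemma impliesL_negLit (h : impliesL F l l') : impliesL F (negLit l') (negLit l) := by
  induction h with
  | single h => exact .single (edge_negLit h)
  | tail _ h ih => exact .head (edge_negLit h) ih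

lemma onCycle_of_onCycle_negLit (h : onCycle F (negLit l)) : onCycle F l := by
  simpa [onCycle] using impliesL_negLit h

/-- By skew-symmetry, `l` and `negLit l` lie on cycles together. -/
lemma fst_ne_of_onCycle_of_not_onCycle (hw : onCycle F w) (hu : ¬ onCycle F u) :
    w.1 ≠ u.1 := by
  intro h
  rcases eq_or_eq_negLit_of_fst_eq h with rfl | rfl
  · exact hu hw
  · exact hu (onCycle_of_onCycle_negLit hw)

lemma evalLit_of_edge {α : V → Bool} (hα : sat2 α F) (he : edge F l l')
    (hl : evalLit α l = true) : evalLit α l' = true := by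
  obtain ⟨c, hc, ⟨rfl, rfl⟩ | ⟨rfl, rfl⟩⟩ := he <;> simp at hl <;> simpa [hl] using hα c hc

end ImplicationDigraph

section Implicant

variable {F : CNF2 V} {ρ : V → Option Bool} {l l' : Lit V}

lemma evalLit_of_litVal {α : V → Bool} {b : Bool} (hα : extendsR α ρ)
    (h : litVal ρ l = some b) : evalLit α l = b := by
  obtain ⟨c, hc, rfl⟩ := Option.map_eq_some_iff.mp h
  simp [evalLit, hα _ _ hc]

lemma litVal_of_forall_evalLit {b : Bool} (h : ∀ α, extendsR α ρ → evalLit α l = b) :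
    litVal ρ l = some b := by
  -- the extension that sets an unassigned `l.1` so that `l` evaluates to `!b`
  have h' := h (fun v => (ρ v).getD (l.2 != b)) fun v c hv => by simp [hv]
  cases hl : ρ l.1 with
  | none => cases b <;> cases hb : l.2 <;> simp_all [evalLit]
  | some c => simp_all [evalLit, litVal]

lemma litVal_true_of_edge (hρ : implicant2 ρ F) (he : edge F l l')
    (h : litVal ρ l = some true) : litVal ρ l' = some true :=
  litVal_of_forall_evalLit fun α hα => evalLit_of_edge (hρ α hα) he (evalLit_of_litVal hα h)

lemma litVal_false_of_edge (hρ : implicant2 ρ F) (he : edge F l l')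
    (h : litVal ρ l' = some false) : litVal ρ l = some false :=
  litVal_of_forall_evalLit fun α hα => by
    by_contra hl
    simpa [evalLit_of_litVal hα h] using evalLit_of_edge (hρ α hα) he (by simpa using hl)

lemma litVal_true_of_reflTransGen (hρ : implicant2 ρ F)
    (h : Relation.ReflTransGen (edge F) l l') (hl : litVal ρ l = some true) :
    litVal ρ l' = some true := by
  induction h with
  | refl => exact hl
  | tail _ he ih => exact litVal_true_of_edge hρ he ih

variable [DecidableEq V]

/-- Setting the unassigned `l` to true gives an extension of `ρ` in which `l'` must hold;
`l'` cannot be `l` (no loops) nor `negLit l`, so it holds in every extension of `ρ`. -/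
lemma litVal_true_of_edge_of_eq_none (hρ : implicant2 ρ F) (hF : looplessD F)
    (he : edge F l l') (hl : ρ l.1 = none) : litVal ρ l' = some true := by
  refine litVal_of_forall_evalLit fun α hα => ?_
  have hα' : extendsR (Function.update α l.1 l.2) ρ := by
    intro v b hv
    by_cases hvl : v = l.1
    · simp_all
    · simpa [hvl] using hα v b hv
  have hl' := evalLit_of_edge (hρ _ hα') he (by simp [evalLit])
  by_cases hvar : l'.1 = l.1
  · rcases eq_or_eq_negLit_of_fst_eq hvar with rfl | rfl
    · exact absurd he (hF l')
    · simp [evalLit, negLit] at hl'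
  · simpa [evalLit, hvar] using hl'

lemma litVal_ne_none_of_onCycle (hρ : implicant2 ρ F) (hF : looplessD F)
    (hl : onCycle F l) : litVal ρ l ≠ none := by
  intro hnone
  obtain ⟨w, he, hw⟩ := Relation.TransGen.head'_iff.mp hl
  have := litVal_true_of_reflTransGen hρ hw
    (litVal_true_of_edge_of_eq_none hρ hF he ((litVal_eq_none_iff ρ l).mp hnone))
  simp_all

lemma litVal_eq_some_true_of_onCycle (hρ : implicant2 ρ F) (hF : looplessD F)
    (hl : onCycle F l) (hne : litVal ρ l ≠ some false) : litVal ρ l = some true := by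
  obtain ⟨b, hb⟩ := Option.ne_none_iff_exists'.mp (litVal_ne_none_of_onCycle hρ hF hl)
  cases b <;> simp_all

lemma litVal_unfix_of_fst_ne {x : V} (h : l.1 ≠ x) : litVal (unfix ρ x) l = litVal ρ l := by
  simp [litVal, unfix, h]

/-- The true literals at the heads of these edges satisfy every clause on `x`; any other clause
is satisfied by an extension of `ρ` that agrees with `α` off `x`. -/
lemma implicant2_unfix (hρ : implicant2 ρ F) (x : V)
    (hx : ∀ l l', l.1 = x → edge F l l' → l'.1 ≠ x ∧ litVal ρ l' = some true) :
    implicant2 (unfix ρ x) F := by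
  intro α hα c hc
  have true_of_edge : ∀ m m', m.1 = x → edge F m m' → evalLit α m' = true := fun m m' hm he =>
    have ⟨hvar, hval⟩ := hx m m' hm he
    evalLit_of_litVal hα (by rwa [litVal_unfix_of_fst_ne hvar])
  by_cases h1 : c.1.1 = x
  · exact .inr (true_of_edge (negLit c.1) c.2 h1 ⟨c, hc, .inl ⟨rfl, rfl⟩⟩)
  by_cases h2 : c.2.1 = x
  · exact .inl (true_of_edge (negLit c.2) c.1 h2 ⟨c, hc, .inr ⟨rfl, rfl⟩⟩)
  have hα' : extendsR (Function.update α x ((ρ x).getD (α x))) ρ := by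
    intro v b hv
    by_cases hvx : v = x
    · subst hvx; simp [hv]
    · simpa [hvx] using hα v b (by simpa [unfix, hvx] using hv)
  simpa [evalLit, h1, h2] using hρ _ hα' c hc

end Implicant

theorem boundary_literal_determined [DecidableEq V] (F : CNF2 V) (hl : looplessD F)
    (ρ : V → Option Bool) (hρ : primeImplicant2 ρ F)
    (u : Lit V) (hu : ¬ onCycle F u)
    (hout : ∀ v, edge F u v → onCycle F v) (hin : ∀ w, edge F w u → onCycle F w) :
    ((∃ v, edge F u v ∧ litVal ρ v = some false) → litVal ρ u = some false) ∧
    ((∃ w, edge F w u ∧ litVal ρ w = some true) → litVal ρ u = some true) ∧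
    ((¬ ∃ v, edge F u v ∧ litVal ρ v = some false) →
     (¬ ∃ w, edge F w u ∧ litVal ρ w = some true) → litVal ρ u = none) := by
  obtain ⟨himp, hprime⟩ := hρ
  refine ⟨fun ⟨v, he, hv⟩ => litVal_false_of_edge himp he hv,
    fun ⟨w, he, hw⟩ => litVal_true_of_edge himp he hw, fun hno_out hno_in => ?_⟩
  push Not at hno_out hno_in
  rw [litVal_eq_none_iff]
  by_contra hfixed
  refine hprime u.1 hfixed (implicant2_unfix himp u.1 fun l v hlu he => ?_)
  rcases eq_or_eq_negLit_of_fst_eq hlu with hlu | hlu <;> rw [hlu] at he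
  · have hv := hout v he
    exact ⟨fst_ne_of_onCycle_of_not_onCycle hv hu,
      litVal_eq_some_true_of_onCycle himp hl hv (hno_out v he)⟩
  · -- `negLit v` is an in-neighbour of `u`, hence fixed, and not to true
    have he' : edge F (negLit v) u := by simpa using edge_negLit he
    have hv := onCycle_of_onCycle_negLit (hin _ he')
    refine ⟨fst_ne_of_onCycle_of_not_onCycle hv hu,
      litVal_eq_some_true_of_onCycle himp hl hv fun hfalse => hno_in _ he' ?_⟩
    rw [litVal_negLit, hfalse]
    rfl
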